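/- arXiv:1806.09054 — 3 statements merged into one kernel-verified Lean document; each statement's English description precedes it below -/
import Mathlib

section
/- Let K ⊂ ℝ^d be a polytope with faces F ∈ F_h(K), n_K faces in total, such that |F| ≲ h_F^{d-1} for each face. Then Σ_{F} (|F|/h_F)^{1/2} ≲ n_K^{d/(2(d-1))} |∂K|^{(d-2)/(2(d-1))}, and consequently, using the isoperimetric inequality |K| ≤ C_d |∂K|^{d/(d-1)}, the quantity (|K|^{1/2}/|∂K|) Σ_F (|F|/h_F)^{1/2} is bounded by a constant depending only on n_K and d. -/
/-!
A face with `a ≤ c h^e` (`e = d - 1`) has `h ≥ (a/c)^{1/e}`, so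
`√(a/h) ≤ c^{1/(2e)} a^{(e-1)/(2e)}`.
Since `(e-1)/(2e) ≤ 1`, Hölder's inequality over at most `n` faces bounds the sum by
`n^{(e+1)/(2e)} (∑ a)^{(e-1)/(2e)}`. The isoperimetric bound gives `√vol ≲ (∑ a)^{(e+1)/(2e)}`,
and the two powers of `∑ a` multiply to exactly `∑ a`, so the ratio is scale invariant.
-/

open Finset

namespace Real

variable {ι : Type*}

/-- Hölder's inequality with exponent `1/q`, applied to the numbers `a_i^q`. -/
theorem sum_rpow_le_card_rpow_mul_sum_rpow (s : Finset ι) {a : ι → ℝ} (ha : ∀ i ∈ s, 0 ≤ a i)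
    {q : ℝ} (hq₀ : 0 ≤ q) (hq₁ : q ≤ 1) :
    ∑ i ∈ s, a i ^ q ≤ (#s : ℝ) ^ (1 - q) * (∑ i ∈ s, a i) ^ q := by
  rcases hq₀.eq_or_lt with rfl | hq
  · simp
  have holder := rpow_sum_le_const_mul_sum_rpow_of_nonneg s (one_le_inv₀ hq |>.2 hq₁)
    fun i hi => rpow_nonneg (ha i hi) q
  rw [sum_congr rfl fun i hi => rpow_rpow_inv (ha i hi) hq.ne'] at holder
  have hsum : 0 ≤ ∑ i ∈ s, a i ^ q := sum_nonneg fun i hi => rpow_nonneg (ha i hi) q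
  calc ∑ i ∈ s, a i ^ q = ((∑ i ∈ s, a i ^ q) ^ q⁻¹) ^ q := (rpow_inv_rpow hsum hq.ne').symm
    _ ≤ ((#s : ℝ) ^ (q⁻¹ - 1) * ∑ i ∈ s, a i) ^ q := by gcongr
    _ = (#s : ℝ) ^ (1 - q) * (∑ i ∈ s, a i) ^ q := by
        rw [mul_rpow (by positivity) (sum_nonneg ha), ← rpow_mul (by positivity),
          sub_mul, inv_mul_cancel₀ hq.ne', one_mul]

theorem div_le_rpow_mul_rpow_of_le_mul_rpow {a c h e : ℝ} (hh : 0 < h) (ha : 0 ≤ a) (he : 0 < e)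
    (hah : a ≤ c * h ^ e) : a / h ≤ c ^ e⁻¹ * a ^ (1 - e⁻¹) := by
  have hc : 0 ≤ c := nonneg_of_mul_nonneg_left (ha.trans hah) (rpow_pos_of_pos hh e)
  have hroot : a ^ e⁻¹ ≤ c ^ e⁻¹ * h := by
    calc a ^ e⁻¹ ≤ (c * h ^ e) ^ e⁻¹ := by gcongr
      _ = c ^ e⁻¹ * h := by rw [mul_rpow hc (by positivity), rpow_rpow_inv hh.le he.ne']
  rw [div_le_iff₀ hh]
  calc a = a ^ e⁻¹ * a ^ (1 - e⁻¹) := by rw [← rpow_add' ha (by simp), add_sub_cancel, rpow_one]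
    _ ≤ c ^ e⁻¹ * h * a ^ (1 - e⁻¹) := by gcongr
    _ = c ^ e⁻¹ * a ^ (1 - e⁻¹) * h := by ring

theorem sqrt_div_le_rpow_mul_rpow_of_le_mul_rpow {a c h e : ℝ} (hh : 0 < h) (ha : 0 ≤ a)
    (he : 0 < e) (hah : a ≤ c * h ^ e) :
    √(a / h) ≤ c ^ (1 / (2 * e)) * a ^ ((e - 1) / (2 * e)) := by
  have hc : 0 ≤ c := nonneg_of_mul_nonneg_left (ha.trans hah) (rpow_pos_of_pos hh e)
  calc √(a / h) ≤ √(c ^ e⁻¹ * a ^ (1 - e⁻¹)) :=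
        sqrt_le_sqrt (div_le_rpow_mul_rpow_of_le_mul_rpow hh ha he hah)
    _ = c ^ (1 / (2 * e)) * a ^ ((e - 1) / (2 * e)) := by
        rw [sqrt_eq_rpow, mul_rpow (by positivity) (by positivity), ← rpow_mul hc, ← rpow_mul ha]
        congr 2 <;> field_simp

theorem sum_sqrt_div_le_of_le_mul_rpow (s : Finset ι) {a h : ι → ℝ} {c e : ℝ} (hc : 0 ≤ c)
    (he : 1 ≤ e) (hh : ∀ i ∈ s, 0 < h i) (ha : ∀ i ∈ s, 0 ≤ a i)
    (hah : ∀ i ∈ s, a i ≤ c * h i ^ e) :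
    ∑ i ∈ s, √(a i / h i) ≤
      c ^ (1 / (2 * e)) * (#s : ℝ) ^ ((e + 1) / (2 * e)) * (∑ i ∈ s, a i) ^ ((e - 1) / (2 * e)) := by
  have he₀ : 0 < e := by linarith
  have hq₀ : 0 ≤ (e - 1) / (2 * e) := div_nonneg (by linarith) (by positivity)
  have hq₁ : (e - 1) / (2 * e) ≤ 1 := (div_le_one (by positivity)).2 (by linarith)
  calc ∑ i ∈ s, √(a i / h i) ≤ ∑ i ∈ s, c ^ (1 / (2 * e)) * a i ^ ((e - 1) / (2 * e)) :=
        sum_le_sum fun i hi =>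
          sqrt_div_le_rpow_mul_rpow_of_le_mul_rpow (hh i hi) (ha i hi) he₀ (hah i hi)
    _ = c ^ (1 / (2 * e)) * ∑ i ∈ s, a i ^ ((e - 1) / (2 * e)) := (mul_sum ..).symm
    _ ≤ c ^ (1 / (2 * e)) *
          ((#s : ℝ) ^ (1 - (e - 1) / (2 * e)) * (∑ i ∈ s, a i) ^ ((e - 1) / (2 * e))) := by
        gcongr
        exact sum_rpow_le_card_rpow_mul_sum_rpow s ha hq₀ hq₁
    _ = c ^ (1 / (2 * e)) * (#s : ℝ) ^ ((e + 1) / (2 * e)) *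
          (∑ i ∈ s, a i) ^ ((e - 1) / (2 * e)) := by
        rw [show 1 - (e - 1) / (2 * e) = (e + 1) / (2 * e) by field_simp; ring, mul_assoc]

theorem sqrt_div_mul_le_of_le_mul_rpow {V B S T A p : ℝ} (hS : 0 < S) (hV : V ≤ B * S ^ (2 * p))
    (hT₀ : 0 ≤ T) (hT : T ≤ A * S ^ (1 - p)) : √V / S * T ≤ √B * A := by
  have hsqrt : √V ≤ √B * S ^ p := by
    calc √V ≤ √(B * S ^ (2 * p)) := sqrt_le_sqrt hV
      _ = √B * S ^ p := by
        rw [sqrt_mul' B (by positivity), mul_comm 2 p, rpow_mul hS.le, rpow_two,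
          sqrt_sq (by positivity)]
  calc √V / S * T ≤ √B * S ^ p / S * (A * S ^ (1 - p)) := by gcongr
    _ = √B * A * (S ^ p * S ^ (1 - p) / S) := by ring
    _ = √B * A := by rw [← rpow_add hS, add_sub_cancel, rpow_one, div_self hS.ne', mul_one]

end Real

theorem stmt_9_general (d n : ℕ) (hd : 2 ≤ d) (c Cd : ℝ) (hc : 0 < c) :
    ∃ C > (0 : ℝ),
      ∀ (s : Finset ℕ) (a h : ℕ → ℝ) (vol : ℝ),
        s.card ≤ n → (∀ i ∈ s, 0 < h i) → (∀ i ∈ s, 0 ≤ a i) →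
        (∀ i ∈ s, a i ≤ c * h i ^ (d - 1)) →
        (∑ i ∈ s, Real.sqrt (a i / h i) ≤
            C * (n : ℝ) ^ ((d : ℝ) / (2 * ((d : ℝ) - 1))) *
              (∑ i ∈ s, a i) ^ (((d : ℝ) - 2) / (2 * ((d : ℝ) - 1)))) ∧
        (0 ≤ vol → vol ≤ Cd * (∑ i ∈ s, a i) ^ ((d : ℝ) / ((d : ℝ) - 1)) →
          0 < ∑ i ∈ s, a i →
          Real.sqrt vol / (∑ i ∈ s, a i) * ∑ i ∈ s, Real.sqrt (a i / h i) ≤ C) := by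
  set e : ℝ := (d : ℝ) - 1 with he_def
  have he : 1 ≤ e := by rw [he_def, le_sub_iff_add_le]; exact_mod_cast hd
  have hpow (x : ℝ) : x ^ (d - 1) = x ^ e := by
    rw [← Real.rpow_natCast, Nat.cast_sub (by omega), Nat.cast_one]
  rw [show (d : ℝ) = e + 1 by ring, show e + 1 - 2 = e - 1 by ring,
    show (e + 1) / e = 2 * ((e + 1) / (2 * e)) by field_simp]
  set C₁ := c ^ (1 / (2 * e))
  set N := (n : ℝ) ^ ((e + 1) / (2 * e))
  have hC₁ : 0 < C₁ := by positivity
  refine ⟨C₁ * (1 + √Cd * N), by positivity, fun s a h vol hcard hh ha hah => ?_⟩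
  have hN : (#s : ℝ) ^ ((e + 1) / (2 * e)) ≤ N :=
    Real.rpow_le_rpow (by positivity) (by exact_mod_cast hcard) (by positivity)
  have hS₀ : 0 ≤ ∑ i ∈ s, a i := sum_nonneg ha
  have hsum : ∑ i ∈ s, √(a i / h i) ≤ C₁ * N * (∑ i ∈ s, a i) ^ ((e - 1) / (2 * e)) := by
    have hah' : ∀ i ∈ s, a i ≤ c * h i ^ e := by simpa [hpow] using hah
    refine (Real.sum_sqrt_div_le_of_le_mul_rpow s hc.le he hh ha hah').trans ?_
    gcongr
  refine ⟨hsum.trans ?_, fun _ hvol hS => ?_⟩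
  · gcongr
    exact le_mul_of_one_le_right hC₁.le (le_add_of_nonneg_right (by positivity))
  · calc √vol / (∑ i ∈ s, a i) * ∑ i ∈ s, √(a i / h i) ≤ √Cd * (C₁ * N) := by
          refine Real.sqrt_div_mul_le_of_le_mul_rpow hS hvol (by positivity) ?_
          rwa [show 1 - (e + 1) / (2 * e) = (e - 1) / (2 * e) by field_simp; ring]
      _ ≤ C₁ * (1 + √Cd * N) := by nlinarith [Real.sqrt_nonneg Cd]

/-- combinatorial face-sum estimate. For a polytope with faces of
areas `a i` and diameters `h i` (`i ∈ s`, `s.card ≤ n`), satisfying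
`a i ≤ c * h i ^ (d-1)`, one has
`Σ_i √(a i / h i) ≤ C n^{d/(2(d-1))} (Σ a)^{(d-2)/(2(d-1))}`, and, with the
isoperimetric inequality `vol ≤ Cd (Σ a)^{d/(d-1)}`, the quantity
`(vol^{1/2}/Σ a) · Σ_i √(a i / h i)` is bounded by a constant depending only on
`n`, `d` (and `c`, `Cd`). -/
theorem stmt_9 (d n : ℕ) (hd : 2 ≤ d) (c Cd : ℝ) (hc : 0 < c) (hCd : 0 < Cd) :
    ∃ C > (0 : ℝ),
      ∀ (s : Finset ℕ) (a h : ℕ → ℝ) (vol : ℝ),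
        s.card ≤ n → (∀ i ∈ s, 0 < h i) → (∀ i ∈ s, 0 ≤ a i) →
        (∀ i ∈ s, a i ≤ c * h i ^ (d - 1)) →
        (∑ i ∈ s, Real.sqrt (a i / h i) ≤
            C * (n : ℝ) ^ ((d : ℝ) / (2 * ((d : ℝ) - 1))) *
              (∑ i ∈ s, a i) ^ (((d : ℝ) - 2) / (2 * ((d : ℝ) - 1)))) ∧
        (0 ≤ vol → vol ≤ Cd * (∑ i ∈ s, a i) ^ ((d : ℝ) / ((d : ℝ) - 1)) →
          0 < ∑ i ∈ s, a i →
          Real.sqrt vol / (∑ i ∈ s, a i) * ∑ i ∈ s, Real.sqrt (a i / h i) ≤ C) :=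
  stmt_9_general d n hd c Cd hc
end

section
/- Let K be an isotropic polytope in the sense that (a) the number of faces n_K is bounded, and (b) the largest face F satisfies the trace inequality ‖1‖²_{L²(F)} ≲ h_K^{-1}‖1‖²_{L²(K)}, i.e., |F| ≲ h_K^{-1}|K|. Then |K| ≂ h_K^d: the volume of K is comparable to the d-th power of its diameter. -/
open MeasureTheory

open Metric Set
open scoped ENNReal NNReal

variable {m : ℕ}

lemma lipschitz_removeNth (i : Fin (m+1)) :
    LipschitzWith 1 (fun x : Fin (m+1) → ℝ => i.removeNth x) := by
  apply LipschitzWith.mk_one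
  intro x y
  rw [dist_pi_le_iff dist_nonneg]
  intro j
  exact dist_le_pi_dist x y (i.succAbove j)

lemma removeNth_image_subset_frontier {U : Set (Fin (m+1) → ℝ)} (hU : IsOpen U)
    (hb : Bornology.IsBounded U) (i : Fin (m+1)) :
    i.removeNth '' U ⊆ i.removeNth '' (frontier U) := by
  rintro _ ⟨x, hx, rfl⟩
  set g : ℝ → (Fin (m+1) → ℝ) := fun t => i.insertNth t (i.removeNth x) with hg
  have hgc : Continuous g := Continuous.finInsertNth (A := fun _ => ℝ) i continuous_id continuous_const
  set S : Set ℝ := g ⁻¹' U with hS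
  have hSopen : IsOpen S := hU.preimage hgc
  have hSne : S.Nonempty := ⟨x i, by simp [hS, hg, Fin.insertNth_self_removeNth, hx]⟩
  obtain ⟨R, hR⟩ := hb.subset_closedBall 0
  have hSbdd : BddAbove S := by
    refine ⟨R, fun t ht => ?_⟩
    have h1 : g t ∈ closedBall 0 R := hR ht
    have h2 : |t| ≤ R := by
      have h3 : ‖g t‖ ≤ R := by simpa [dist_zero_right] using h1
      have h4 : ‖(g t) i‖ ≤ ‖g t‖ := norm_le_pi_norm (g t) i
      have h5 : (g t) i = t := by simp [hg, Fin.insertNth_apply_same]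
      rw [h5] at h4
      simpa using h4.trans h3
    exact le_trans (le_abs_self t) h2
  set t₀ := sSup S with ht₀
  have hlub : IsLUB S t₀ := isLUB_csSup hSne hSbdd
  have hcl : g t₀ ∈ closure U := by
    have h1 : t₀ ∈ closure S := hlub.mem_closure hSne
    have := image_closure_subset_closure_image hgc (s := S)
    exact closure_mono (image_preimage_subset g U) (this ⟨t₀, h1, rfl⟩)
  have hnot : g t₀ ∉ U := by
    intro hmem
    have ht₀S : t₀ ∈ S := hmem
    obtain ⟨ε, hε, hball⟩ := Metric.isOpen_iff.mp hSopen t₀ ht₀S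
    have : t₀ + ε/2 ∈ S := hball (by simp [Real.dist_eq, abs_of_pos, hε] : dist (t₀ + ε/2) t₀ < ε)
    have := hlub.1 this
    linarith
  have hfr : g t₀ ∈ frontier U := by
    rw [hU.frontier_eq]; exact ⟨hcl, hnot⟩
  exact ⟨g t₀, hfr, by simp [hg, Fin.removeNth_insertNth]⟩
/-- The coordinate-deletion map as a homeomorphism witness. -/
def finRemHomeo {m : ℕ} (i : Fin (m+1)) : (Fin (m+1) → ℝ) ≃ₜ ℝ × (Fin m → ℝ) where
  toEquiv := (Fin.insertNthEquiv (fun _ => ℝ) i).symm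
  continuous_toFun := (continuous_apply i).prodMk (continuous_pi fun j => continuous_apply (i.succAbove j))
  continuous_invFun := Continuous.finInsertNth (A := fun _ => ℝ) i continuous_fst continuous_snd

lemma isOpenMap_removeNth {m : ℕ} (i : Fin (m+1)) :
    IsOpenMap (fun x : Fin (m+1) → ℝ => i.removeNth x) := by
  have : (fun x : Fin (m+1) → ℝ => i.removeNth x)
      = Prod.snd ∘ (finRemHomeo i) := rfl
  rw [this]
  exact isOpenMap_snd.comp (finRemHomeo i).isOpenMap

theorem loomis_whitney_open : ∀ (m : ℕ) (U : Set (Fin (m+1) → ℝ)), IsOpen U → U.Nonempty →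
    volume U ^ m ≤ ∏ i : Fin (m+1), volume (i.removeNth '' U) := by
  intro m
  induction m with
  | zero =>
    intro U hU hne
    have h1 : (0 : Fin 1).removeNth '' U = univ := by
      have : ((0 : Fin 1).removeNth '' U).Nonempty := hne.image _
      exact this.eq_univ
    rw [Fin.prod_univ_one, h1, pow_zero]
    have : (volume : Measure (Fin 0 → ℝ)) univ = 1 := by
      simp [volume_pi, Measure.pi_univ]
    rw [this]
  | succ m IH =>
    intro U hU hne
    classical
    set e := MeasurableEquiv.piFinSuccAbove (fun _ : Fin (m+2) => ℝ) 0 with he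
    set e₁ := MeasurableEquiv.piFinSuccAbove (fun _ : Fin (m+1) => ℝ) 0 with he₁
    have hmp : MeasurePreserving e volume volume :=
      volume_preserving_piFinSuccAbove (fun _ : Fin (m+2) => ℝ) 0
    have hmp₁ : MeasurePreserving e₁ volume volume :=
      volume_preserving_piFinSuccAbove (fun _ : Fin (m+1) => ℝ) 0
    -- V = image of U under the slicing equivalence
    set V : Set (ℝ × (Fin (m+1) → ℝ)) := e '' U with hV
    have heq : ∀ x, e x = (x 0, Fin.removeNth 0 x) := fun x => rfl
    have heqs : ∀ (t : ℝ) (y : Fin (m+1) → ℝ), e.symm (t, y) = Fin.insertNth 0 t y :=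
      fun t y => rfl
    have hVmem : ∀ (t : ℝ) (y : Fin (m+1) → ℝ), (t, y) ∈ V ↔ Fin.insertNth 0 t y ∈ U := by
      intro t y
      constructor
      · rintro ⟨x, hx, hex⟩
        have : e.symm (t, y) = x := by rw [← hex]; exact e.symm_apply_apply x
        rw [← heqs t y, this]; exact hx
      · intro h
        exact ⟨Fin.insertNth 0 t y, h, by
          rw [← heqs t y]; exact e.apply_symm_apply (t, y)⟩
    have hVopen : IsOpen V := by
      have : V = e.symm ⁻¹' U := by
        ext ⟨t, y⟩
        rw [hVmem, mem_preimage, heqs]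
      rw [this]
      exact hU.preimage (Continuous.finInsertNth (A := fun _ => ℝ) 0
        continuous_fst continuous_snd)
    have hVms : MeasurableSet V := hVopen.measurableSet
    have hvolV : volume U = volume V := by
      have h1 : (⇑e ⁻¹' V) = U := by rw [hV]; exact Set.preimage_image_eq _ e.injective
      have h2 := hmp.measure_preimage (μa := volume) hVms.nullMeasurableSet
      rw [h1] at h2
      exact h2
    -- faces
    set P : Fin (m+2) → Set (Fin (m+1) → ℝ) := fun i => i.removeNth '' U with hP
    have hPopen : ∀ i, IsOpen (P i) := fun i => isOpenMap_removeNth i U hU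
    -- sliced faces
    set W : Fin (m+1) → Set (ℝ × (Fin m → ℝ)) := fun j => e₁ '' P (Fin.succ j) with hW
    have hWopen : ∀ j, IsOpen (W j) := by
      intro j
      have : W j = e₁.symm ⁻¹' (P (Fin.succ j)) := by
        ext ⟨t, y⟩
        constructor
        · rintro ⟨x, hx, hex⟩
          have : e₁.symm (t, y) = x := by rw [← hex]; exact e₁.symm_apply_apply x
          rw [mem_preimage, this]; exact hx
        · intro h
          exact ⟨e₁.symm (t, y), h, e₁.apply_symm_apply (t, y)⟩
      rw [this]
      exact (hPopen _).preimage (Continuous.finInsertNth (A := fun _ => ℝ) 0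
        continuous_fst continuous_snd)
    have hWvol : ∀ j, volume (W j) = volume (P (Fin.succ j)) := by
      intro j
      have h1 : (⇑e₁ ⁻¹' (W j)) = P (Fin.succ j) := by
        rw [hW]; exact Set.preimage_image_eq _ e₁.injective
      have h2 := hmp₁.measure_preimage (μa := volume) (hWopen j).measurableSet.nullMeasurableSet
      rw [h1] at h2
      exact h2.symm
    -- slice functions
    set v : ℝ → ℝ≥0∞ := fun t => volume (Prod.mk t ⁻¹' V) with hv
    set g : Fin (m+1) → ℝ → ℝ≥0∞ := fun j t => volume (Prod.mk t ⁻¹' (W j)) with hg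
    have hgm : ∀ j, Measurable (g j) :=
      fun j => measurable_measure_prodMk_left (hWopen j).measurableSet
    -- Fubini for V and W j
    have hVfub : volume V = ∫⁻ t, v t := by
      rw [Measure.volume_eq_prod, Measure.prod_apply hVms]
    have hWfub : ∀ j, volume (W j) = ∫⁻ t, g j t := by
      intro j
      rw [Measure.volume_eq_prod, Measure.prod_apply (hWopen j).measurableSet]
    -- the key pointwise bound
    have hkey : ∀ t : ℝ, v t ≤ (volume (P 0) * ∏ j : Fin (m+1), g j t) ^ ((m+1 : ℝ)⁻¹) := by
      intro t
      set Ut : Set (Fin (m+1) → ℝ) := Prod.mk t ⁻¹' V with hUt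
      have hUtopen : IsOpen Ut := hVopen.preimage (Continuous.prodMk_right t)
      have hpow : v t ^ (m+1) ≤ volume (P 0) * ∏ j : Fin (m+1), g j t := by
        rcases Ut.eq_empty_or_nonempty with hemp | hne'
        · have : v t = 0 := by rw [hv]; simp only [← hUt, hemp, measure_empty]
          rw [this, zero_pow (Nat.succ_ne_zero m)]
          exact zero_le
        · have hsub0 : Ut ⊆ P 0 := by
            rintro y hy
            rw [hUt, mem_preimage, hVmem] at hy
            exact ⟨Fin.insertNth 0 t y, hy, by simp [Fin.removeNth_insertNth]⟩
          have hsubj : ∀ j : Fin (m+1), j.removeNth '' Ut ⊆ Prod.mk t ⁻¹' (W j) := by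
            rintro j _ ⟨y, hy, rfl⟩
            rw [hUt, mem_preimage, hVmem] at hy
            rw [mem_preimage, hW]
            refine ⟨Fin.insertNth 0 t (j.removeNth y), ?_, ?_⟩
            · refine ⟨Fin.insertNth 0 t y, hy, ?_⟩
              ext l
              simp only [Fin.removeNth, Fin.insertNth_zero']
              cases l using Fin.cases with
              | zero => simp [Fin.succ_succAbove_zero, Fin.removeNth]
              | succ l => simp [Fin.succ_succAbove_succ, Fin.removeNth]
            · rw [he₁]
              show (_, _) = _
              simp [Fin.removeNth_insertNth]
          have hIH := IH Ut hUtopen hne'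
          have hv0 : v t ≤ volume (P 0) := measure_mono hsub0
          calc v t ^ (m+1) = v t * v t ^ m := by ring
          _ ≤ volume (P 0) * ∏ j : Fin (m+1), volume (j.removeNth '' Ut) :=
                mul_le_mul' hv0 hIH
          _ ≤ volume (P 0) * ∏ j : Fin (m+1), g j t := by
                gcongr with j
                exact measure_mono (hsubj j)
      calc v t = (v t ^ (m+1)) ^ ((m+1 : ℝ)⁻¹) := by
            rw [← ENNReal.rpow_natCast (v t) (m+1), ← ENNReal.rpow_mul,
              show ((m+1 : ℕ) : ℝ) * ((m : ℝ)+1)⁻¹ = 1 by push_cast; field_simp,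
              ENNReal.rpow_one]
      _ ≤ _ := by
            apply ENNReal.rpow_le_rpow hpow (by positivity)
    -- integrate
    have hmain : volume U ≤ (volume (P 0) * ∏ j : Fin (m+1), volume (P (Fin.succ j)))
        ^ ((m+1 : ℝ)⁻¹) := by
      rw [hvolV, hVfub]
      calc ∫⁻ t, v t ≤ ∫⁻ t, (volume (P 0) * ∏ j : Fin (m+1), g j t) ^ ((m+1 : ℝ)⁻¹) :=
            lintegral_mono hkey
      _ = (volume (P 0)) ^ ((m+1 : ℝ)⁻¹)
            * ∫⁻ t, ∏ j : Fin (m+1), (g j t) ^ ((m+1 : ℝ)⁻¹) := by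
            rw [← lintegral_const_mul]
            · congr 1 with t
              rw [ENNReal.mul_rpow_of_nonneg _ _ (by positivity),
                ENNReal.prod_rpow_of_nonneg (by positivity)]
            · exact Finset.measurable_prod _
                (fun j _ => ENNReal.continuous_rpow_const.measurable.comp (hgm j))
      _ ≤ (volume (P 0)) ^ ((m+1 : ℝ)⁻¹)
            * ∏ j : Fin (m+1), (∫⁻ t, g j t) ^ ((m+1 : ℝ)⁻¹) := by
            gcongr
            refine ENNReal.lintegral_prod_norm_pow_le Finset.univ
              (fun j _ => (hgm j).aemeasurable) ?_ (fun j _ => by positivity)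
            simp only [Finset.sum_const, Finset.card_univ, Fintype.card_fin, nsmul_eq_mul]
            rw [show ((m+1 : ℕ) : ℝ) * ((m : ℝ)+1)⁻¹ = 1 by push_cast; field_simp]
      _ = _ := by
            have hWint : ∀ j : Fin (m+1), ∫⁻ (t : ℝ), g j t = volume (P (Fin.succ j)) :=
              fun j => by rw [← hWfub j, hWvol j]
            simp_rw [hWint]
            rw [ENNReal.mul_rpow_of_nonneg _ _ (by positivity),
              ENNReal.prod_rpow_of_nonneg (by positivity)]
    -- raise to the (m+1)-st power
    calc volume U ^ (m+1)
        ≤ ((volume (P 0) * ∏ j : Fin (m+1), volume (P (Fin.succ j)))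
            ^ ((m+1 : ℝ)⁻¹)) ^ (m+1) := pow_le_pow_left' hmain _
    _ = volume (P 0) * ∏ j : Fin (m+1), volume (P (Fin.succ j)) := by
        rw [← ENNReal.rpow_natCast _ (m+1), ← ENNReal.rpow_mul,
          show ((m : ℝ)+1)⁻¹ * ((m+1 : ℕ) : ℝ) = 1 by push_cast; field_simp,
          ENNReal.rpow_one]
    _ = ∏ i : Fin (m+2), volume (P i) :=
        (Fin.prod_univ_succ (fun i => volume (P i))).symm
lemma euclidean_bounded_hausdorff_ne_top {m : ℕ} {A : Set (EuclideanSpace ℝ (Fin m))}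
    (hA : Bornology.IsBounded A) : μH[(m : ℝ)] A ≠ ⊤ := by
  set ψ := WithLp.equiv 2 (Fin m → ℝ) with hψ
  obtain ⟨Kc, hanti⟩ : ∃ K, AntilipschitzWith K ψ :=
    ⟨_, PiLp.antilipschitzWith_ofLp 2 (fun _ : Fin m => ℝ)⟩
  have h1 := hanti.le_hausdorffMeasure_image (d := (m : ℝ)) (by positivity) A
  have h2 : (μH[(m : ℝ)] : Measure (Fin m → ℝ)) = volume := by
    have := hausdorffMeasure_pi_real (ι := Fin m)
    rwa [Fintype.card_fin] at this
  have h3 : Bornology.IsBounded (ψ '' A) :=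
    (PiLp.lipschitzWith_ofLp 2 (fun _ : Fin m => ℝ)).isBounded_image hA
  have h4 : μH[(m : ℝ)] (ψ '' A) < ⊤ := by
    rw [h2]
    exact h3.measure_lt_top
  have h5 : ((Kc : ℝ≥0) : ℝ≥0∞) ^ (m:ℝ) * μH[(m : ℝ)] (ψ '' A) < ⊤ :=
    ENNReal.mul_lt_top
      (ENNReal.rpow_lt_top_of_nonneg (by positivity) ENNReal.coe_ne_top) h4
  exact (lt_of_le_of_lt h1 h5).ne

lemma flat_bounded_hausdorff_ne_top {m : ℕ} {S : Set (EuclideanSpace ℝ (Fin (m+1)))}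
    (hb : Bornology.IsBounded S) {u : EuclideanSpace ℝ (Fin (m+1))} {b : ℝ} (hu : u ≠ 0)
    (hS : S ⊆ {x | (inner ℝ u x : ℝ) = b}) : μH[(m : ℝ)] S ≠ ⊤ := by
  classical
  haveI : Fact (Module.finrank ℝ (EuclideanSpace ℝ (Fin (m+1))) = m+1) :=
    ⟨finrank_euclideanSpace_fin⟩
  set W := (Submodule.span ℝ {u})ᗮ with hWdef
  set x₀ : EuclideanSpace ℝ (Fin (m+1)) := (b / (inner ℝ u u : ℝ)) • u with hx₀
  have hiso : Isometry (fun x : EuclideanSpace ℝ (Fin (m+1)) => x - x₀) :=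
    Isometry.of_dist_eq (fun x y => dist_sub_right x y x₀)
  have h0 : μH[(m:ℝ)] ((fun x => x - x₀) '' S) = μH[(m:ℝ)] S :=
    hiso.hausdorffMeasure_image (Or.inl (by positivity)) S
  set S' := (fun x => x - x₀) '' S with hS'def
  have hS'W : S' ⊆ (W : Set _) := by
    rintro _ ⟨x, hx, rfl⟩
    rw [SetLike.mem_coe, hWdef, Submodule.mem_orthogonal_singleton_iff_inner_left]
    have hxb : (inner ℝ u x : ℝ) = b := hS hx
    have huu : (inner ℝ u u : ℝ) ≠ 0 := inner_self_ne_zero.mpr hu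
    show (inner ℝ (x - x₀) u : ℝ) = 0
    have hxb' : (inner ℝ x u : ℝ) = b := by rw [real_inner_comm]; exact hxb
    rw [inner_sub_left, hx₀, real_inner_smul_left, hxb', div_mul_cancel₀ _ huu, sub_self]
  set T := (Subtype.val : W → _) ⁻¹' S' with hTdef
  have hTcoe : Subtype.val '' T = S' :=
    Set.image_preimage_eq_of_subset (by simpa using hS'W)
  have h1 : μH[(m:ℝ)] (Subtype.val '' T) = μH[(m:ℝ)] T :=
    (isometry_subtype_coe).hausdorffMeasure_image (Or.inl (by positivity)) T
  set B := OrthonormalBasis.fromOrthogonalSpanSingleton (𝕜 := ℝ) m hu with hBdef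
  have h2 : μH[(m:ℝ)] (⇑B.repr '' T) = μH[(m:ℝ)] T :=
    B.repr.isometry.hausdorffMeasure_image (Or.inl (by positivity)) T
  have hb' : Bornology.IsBounded S' := hiso.lipschitz.isBounded_image hb
  have hbT : Bornology.IsBounded T := by
    obtain ⟨R, hR⟩ := isBounded_iff_forall_norm_le.mp hb'
    refine isBounded_iff_forall_norm_le.mpr ⟨R, fun t ht => ?_⟩
    simpa using hR _ ht
  have hbB : Bornology.IsBounded (⇑B.repr '' T) :=
    B.repr.isometry.lipschitz.isBounded_image hbT
  have hfin := euclidean_bounded_hausdorff_ne_top hbB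
  rw [h2] at hfin
  rw [← h0, ← hTcoe, h1]
  exact hfin

/-- The identity between the sup-metric pi space and Euclidean space, as a homeomorphism. -/
noncomputable def pilpHomeo (m : ℕ) : (Fin (m+1) → ℝ) ≃ₜ EuclideanSpace ℝ (Fin (m+1)) where
  toEquiv := (WithLp.equiv 2 (Fin (m+1) → ℝ)).symm
  continuous_toFun := PiLp.continuous_toLp _ _
  continuous_invFun := PiLp.continuous_ofLp _ _

/-- volume scaling of an isotropic polytope. `K ⊂ ℝ^d` is a polytope
(its boundary is a union of at most `n` flat faces), and its largest face `F`
satisfies `|F| ≤ c h_K⁻¹ |K|` (the trace-inequality bound with `v = 1`). Then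
`|K| ≂ h_K^d` with constants depending only on `n`, `c` and `d`. -/
theorem stmt_11 (d n : ℕ) (hd : 1 ≤ d) (c : ℝ) (hc : 0 < c) :
    ∃ C₁ > (0 : ℝ), ∃ C₂ > (0 : ℝ),
      ∀ (K : Set (EuclideanSpace ℝ (Fin d))) (s : Finset ℕ)
        (F : ℕ → Set (EuclideanSpace ℝ (Fin d))),
        IsOpen K → Bornology.IsBounded K → K.Nonempty →
        s.card ≤ n → frontier K = ⋃ i ∈ s, F i →
        (∀ i ∈ s, MeasurableSet (F i)) →
        -- each face is flat (lies in an affine hyperplane): K is a polytope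
        (∀ i ∈ s, ∃ (u : EuclideanSpace ℝ (Fin d)) (b : ℝ), u ≠ 0 ∧
          F i ⊆ {x | (inner ℝ u x : ℝ) = b}) →
        -- the largest face F i₀ satisfies |F i₀| ≤ c h_K⁻¹ |K|
        (∃ i₀ ∈ s, (∀ j ∈ s, μH[(d : ℝ) - 1] (F j) ≤ μH[(d : ℝ) - 1] (F i₀)) ∧
          (μH[(d : ℝ) - 1] (F i₀)).toReal ≤
            c * (Metric.diam K)⁻¹ * (volume K).toReal) →
        C₁ * (Metric.diam K) ^ d ≤ (volume K).toReal ∧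
          (volume K).toReal ≤ C₂ * (Metric.diam K) ^ d := by

  obtain ⟨m, rfl⟩ : ∃ m, d = m + 1 := ⟨d - 1, by omega⟩
  have hC₁pos : (0 : ℝ) < (((n:ℝ)*c + 1) ^ (m+1))⁻¹ := by
    have h1 : (0:ℝ) < (n:ℝ)*c + 1 := by
      have := mul_nonneg (Nat.cast_nonneg (α := ℝ) n) hc.le
      linarith
    positivity
  have hC₂pos : (0 : ℝ) <
      (volume (Metric.ball (0 : EuclideanSpace ℝ (Fin (m+1))) 1)).toReal := by
    have h1 : 0 < volume (Metric.ball (0 : EuclideanSpace ℝ (Fin (m+1))) 1) :=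
      Metric.measure_ball_pos _ _ one_pos
    exact ENNReal.toReal_pos h1.ne' measure_ball_lt_top.ne
  refine ⟨_, hC₁pos, _, hC₂pos, ?_⟩
  intro K s F hKopen hKbdd hKne hcard hfr hFms hflat htrace
  obtain ⟨i₀, hi₀s, hmax, htr⟩ := htrace
  have hexp : ((m+1 : ℕ) : ℝ) - 1 = (m : ℝ) := by push_cast; ring
  rw [hexp] at hmax htr
  -- diameter is positive
  have hh : 0 < Metric.diam K := by
    obtain ⟨x₀, hx₀⟩ := hKne
    obtain ⟨ε, hε, hball⟩ := Metric.isOpen_iff.mp hKopen x₀ hx₀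
    set y := x₀ + EuclideanSpace.single (0 : Fin (m+1)) (ε/2) with hy
    have hdist : dist y x₀ = ε/2 := by
      rw [hy, dist_eq_norm, add_sub_cancel_left, EuclideanSpace.norm_single]
      rw [Real.norm_eq_abs, abs_of_pos (by linarith)]
    have hyK : y ∈ K := hball (by rw [Metric.mem_ball, hdist]; linarith)
    have := Metric.dist_le_diam_of_mem hKbdd hyK hx₀
    rw [hdist] at this
    linarith
  have hVfin : volume K ≠ ⊤ := hKbdd.measure_lt_top.ne
  have hVpos : 0 < (volume K).toReal :=
    ENNReal.toReal_pos (hKopen.measure_pos volume hKne).ne' hVfin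
  constructor
  · -- LOWER BOUND
    -- move to the sup-metric pi space
    set f := WithLp.equiv 2 (Fin (m+1) → ℝ) with hf
    set K' := ⇑f '' K with hK'
    have hKpre : K' = ⇑(pilpHomeo m) ⁻¹' K := by
      rw [hK', Equiv.image_eq_preimage_symm]
      rfl
    have hK'open : IsOpen K' := by
      rw [hKpre]; exact hKopen.preimage (pilpHomeo m).continuous
    have hK'bdd : Bornology.IsBounded K' :=
      (PiLp.lipschitzWith_ofLp 2 (fun _ : Fin (m+1) => ℝ)).isBounded_image hKbdd
    have hK'ne : K'.Nonempty := hKne.image _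
    have hvol' : volume K' = volume K := by
      have h2 := (PiLp.volume_preserving_ofLp (Fin (m+1))).measure_preimage
        (μa := volume) hK'open.measurableSet.nullMeasurableSet
      have h1 : (WithLp.ofLp ⁻¹' K') = K := by rw [hK']; exact Set.preimage_image_eq _ f.injective
      rw [h1] at h2
      exact h2.symm
    have hfront' : frontier K' = ⇑f '' (frontier K) := by
      rw [hKpre, ← Homeomorph.preimage_frontier, Equiv.image_eq_preimage_symm]
      rfl
    -- boundary measure
    set B : ℝ≥0∞ := μH[(m:ℝ)] (frontier K) with hB
    have hμpi : (μH[(m : ℝ)] : Measure (Fin m → ℝ)) = volume := by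
      have := hausdorffMeasure_pi_real (ι := Fin m)
      rwa [Fintype.card_fin] at this
    have hprojle : ∀ i : Fin (m+1), volume (i.removeNth '' K') ≤ B := by
      intro i
      have h1 : i.removeNth '' K' ⊆ i.removeNth '' (frontier K') :=
        removeNth_image_subset_frontier hK'open hK'bdd i
      calc volume (i.removeNth '' K') ≤ volume (i.removeNth '' (frontier K')) :=
            measure_mono h1
      _ = μH[(m:ℝ)] (i.removeNth '' (frontier K')) := by rw [hμpi]
      _ ≤ (1:ℝ≥0) ^ (m:ℝ) * μH[(m:ℝ)] (frontier K') :=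
            (lipschitz_removeNth i).hausdorffMeasure_image_le (by positivity) _
      _ = μH[(m:ℝ)] (frontier K') := by simp
      _ = μH[(m:ℝ)] (⇑f '' (frontier K)) := by rw [hfront']
      _ ≤ (1:ℝ≥0) ^ (m:ℝ) * μH[(m:ℝ)] (frontier K) :=
            (PiLp.lipschitzWith_ofLp 2 (fun _ : Fin (m+1) => ℝ)).hausdorffMeasure_image_le
              (by positivity) _
      _ = B := by simp [hB]
    have hEN : volume K ^ m ≤ B ^ (m+1) := by
      calc volume K ^ m = volume K' ^ m := by rw [hvol']
      _ ≤ ∏ i : Fin (m+1), volume (i.removeNth '' K') :=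
            loomis_whitney_open m K' hK'open hK'ne
      _ ≤ B ^ (m+1) := by
            have := Finset.prod_le_pow_card Finset.univ
              (fun i : Fin (m+1) => volume (i.removeNth '' K')) B
              (fun i _ => hprojle i)
            simpa using this
    -- finiteness of the boundary measure
    have hFsub : ∀ i ∈ s, F i ⊆ frontier K := by
      intro i hi
      rw [hfr]
      exact Set.subset_biUnion_of_mem hi
    have hFbd : Bornology.IsBounded (frontier K) :=
      hKbdd.closure.subset frontier_subset_closure
    have hFfin : μH[(m:ℝ)] (F i₀) ≠ ⊤ := by
      obtain ⟨u, bb, hu, hflat'⟩ := hflat i₀ hi₀s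
      exact flat_bounded_hausdorff_ne_top (hFbd.subset (hFsub i₀ hi₀s)) hu hflat'
    have hBle : B ≤ (s.card : ℝ≥0∞) * μH[(m:ℝ)] (F i₀) := by
      rw [hB, hfr]
      calc μH[(m:ℝ)] (⋃ i ∈ s, F i) ≤ ∑ i ∈ s, μH[(m:ℝ)] (F i) :=
            measure_biUnion_finset_le _ _
      _ ≤ s.card • μH[(m:ℝ)] (F i₀) := Finset.sum_le_card_nsmul s _ _ (fun j hj => hmax j hj)
      _ = (s.card : ℝ≥0∞) * μH[(m:ℝ)] (F i₀) := nsmul_eq_mul _ _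
    have hBfin : B ≠ ⊤ := by
      intro hcon
      rw [hcon] at hBle
      exact (ENNReal.mul_lt_top (ENNReal.natCast_lt_top s.card)
        hFfin.lt_top).ne (top_le_iff.mp hBle)
    -- convert to real numbers
    set V := (volume K).toReal with hV
    set h := Metric.diam K with hhd
    have hBreal : B.toReal ≤ (n:ℝ) * (c * h⁻¹ * V) := by
      have h1 : B.toReal ≤ (s.card : ℝ) * (μH[(m:ℝ)] (F i₀)).toReal := by
        have h2 := ENNReal.toReal_mono
          (ENNReal.mul_ne_top (ENNReal.natCast_ne_top s.card) hFfin) hBle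
        rwa [ENNReal.toReal_mul, ENNReal.toReal_natCast] at h2
      calc B.toReal ≤ (s.card : ℝ) * (μH[(m:ℝ)] (F i₀)).toReal := h1
      _ ≤ (n:ℝ) * (μH[(m:ℝ)] (F i₀)).toReal := by
            apply mul_le_mul_of_nonneg_right _ ENNReal.toReal_nonneg
            exact_mod_cast hcard
      _ ≤ (n:ℝ) * (c * h⁻¹ * V) := by
            apply mul_le_mul_of_nonneg_left htr (Nat.cast_nonneg n)
    have hVm : V ^ m ≤ B.toReal ^ (m+1) := by
      have h2 := ENNReal.toReal_mono (by
        exact ENNReal.pow_ne_top hBfin) hEN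
      rwa [ENNReal.toReal_pow, ENNReal.toReal_pow] at h2
    -- real arithmetic
    set a := (n:ℝ) * c with hadef
    have ha : 0 ≤ a := mul_nonneg (Nat.cast_nonneg n) hc.le
    have h2 : B.toReal ≤ a * h⁻¹ * V := by
      rw [hadef]; calc B.toReal ≤ (n:ℝ) * (c * h⁻¹ * V) := hBreal
      _ = (n:ℝ) * c * h⁻¹ * V := by ring
    have h3 : V ^ m ≤ (a * h⁻¹ * V) ^ (m+1) :=
      hVm.trans (pow_le_pow_left₀ ENNReal.toReal_nonneg h2 _)
    have h4 : V ^ m * h ^ (m+1) ≤ a ^ (m+1) * V ^ (m+1) := by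
      have h5 := mul_le_mul_of_nonneg_right h3 (pow_pos hh (m+1)).le
      calc V ^ m * h ^ (m+1) ≤ (a * h⁻¹ * V) ^ (m+1) * h ^ (m+1) := h5
      _ = a ^ (m+1) * V ^ (m+1) * (h⁻¹ * h) ^ (m+1) := by ring
      _ = a ^ (m+1) * V ^ (m+1) := by
            rw [inv_mul_cancel₀ hh.ne', one_pow, mul_one]
    have hkey : h ^ (m+1) ≤ a ^ (m+1) * V := by
      have h5 : V ^ m * h ^ (m+1) ≤ V ^ m * (a ^ (m+1) * V) := by
        calc V ^ m * h ^ (m+1) ≤ a ^ (m+1) * V ^ (m+1) := h4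
        _ = V ^ m * (a ^ (m+1) * V) := by ring
      exact le_of_mul_le_mul_left h5 (pow_pos hVpos m)
    have ha1 : a ^ (m+1) ≤ (a+1) ^ (m+1) := pow_le_pow_left₀ ha (by linarith) _
    have hfinal : h ^ (m+1) ≤ (a+1) ^ (m+1) * V :=
      hkey.trans (mul_le_mul_of_nonneg_right ha1 hVpos.le)
    have hpos : (0:ℝ) < (a+1) ^ (m+1) := pow_pos (by linarith) _
    calc (((n:ℝ)*c + 1) ^ (m+1))⁻¹ * h ^ (m+1)
        ≤ (((n:ℝ)*c + 1) ^ (m+1))⁻¹ * ((a+1) ^ (m+1) * V) := by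
          apply mul_le_mul_of_nonneg_left hfinal (by positivity)
    _ = V := by
          rw [hadef, ← mul_assoc, inv_mul_cancel₀ hpos.ne', one_mul]
  · -- UPPER BOUND
    obtain ⟨x₀, hx₀⟩ := hKne
    have hsub : K ⊆ Metric.closedBall x₀ (Metric.diam K) := fun y hy =>
      Metric.mem_closedBall.mpr (Metric.dist_le_diam_of_mem hKbdd hy hx₀)
    have h1 : volume K ≤ volume (Metric.closedBall x₀ (Metric.diam K)) := measure_mono hsub
    rw [Measure.addHaar_closedBall _ _ Metric.diam_nonneg, finrank_euclideanSpace_fin] at h1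
    have hne : ENNReal.ofReal (Metric.diam K ^ (m+1))
        * volume (Metric.ball (0 : EuclideanSpace ℝ (Fin (m+1))) 1) ≠ ⊤ :=
      ENNReal.mul_ne_top ENNReal.ofReal_ne_top measure_ball_lt_top.ne
    calc (volume K).toReal
        ≤ (ENNReal.ofReal (Metric.diam K ^ (m+1))
            * volume (Metric.ball (0 : EuclideanSpace ℝ (Fin (m+1))) 1)).toReal :=
          ENNReal.toReal_mono hne h1
    _ = (volume (Metric.ball (0 : EuclideanSpace ℝ (Fin (m+1))) 1)).toReal
          * (Metric.diam K) ^ (m+1) := by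
          rw [ENNReal.toReal_mul, ENNReal.toReal_ofReal (by positivity)]
          ring
end

section
/- Let K be a polytope satisfying the height and hourglass conditions, so that ‖v − v̄_{∂K}‖_{L²(K)} ≲ h_K‖∇v‖_{L²(conv(K))} and |K| ≂ h_K^d hold. Let Π_K u ∈ P₁ be the elliptic projection with ∇Π_K u = average of ∇u over K, normalized by ∫_{∂K}Π_K u = ∫_{∂K} u. Then for u ∈ H²(conv(K)): h_K^{-1}‖u − Π_K u‖_{L²(K)} + ‖∇(u − Π_K u)‖_{L²(K)} ≲ h_K |u|_{H²(conv(K))}. -/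
/-!
The gradient estimate is a Poincaré inequality on the convex hull `S = conv K` with the mean
taken over `K`. Writing `f x - f y` as the integral of `Df` along the segment `[y, x] ⊆ S` and
integrating over `x ∈ S`, `y ∈ K`, the substitution `z = (1 - t) • y + t • x` (in `y` when
`t ≤ 1/2`, in `x` when `t ≥ 1/2`) has Jacobian at most `2 ^ n`, which gives
`∫_S ‖f - ⨍_K f‖² ≤ 2 ^ n (|S| / |K|) h_K² ∫_S ‖Df‖²`; moreover `|S| ≤ |B₁| h_K ^ n ≲ |K|`.
The `L²` estimate then follows from the boundary-average Poincaré inequality applied to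
`u - Π_K u`, whose boundary mean vanishes and whose gradient is `∇u - ⨍_K ∇u`.
-/

open MeasureTheory Set Metric Module AffineMap
open scoped ENNReal

theorem sq_lintegral_le_measure_univ_mul_lintegral_sq {α : Type*} [MeasurableSpace α]
    (ν : Measure α) {F : α → ℝ≥0∞} (hF : AEMeasurable F ν) :
    (∫⁻ a, F a ∂ν) ^ 2 ≤ ν univ * ∫⁻ a, F a ^ 2 ∂ν := by
  have h := ENNReal.lintegral_mul_le_Lp_mul_Lq ν Real.HolderConjugate.two_two hF
    (aemeasurable_const (b := 1))
  simp only [Pi.mul_apply, mul_one, ENNReal.one_rpow, lintegral_one] at h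
  calc (∫⁻ a, F a ∂ν) ^ 2
      ≤ ((∫⁻ a, F a ^ (2 : ℝ) ∂ν) ^ (1 / 2 : ℝ) * ν univ ^ (1 / 2 : ℝ)) ^ 2 := by gcongr
    _ = ν univ * ∫⁻ a, F a ^ 2 ∂ν := by
      simp only [mul_pow, ← ENNReal.rpow_mul_natCast, ENNReal.rpow_two]
      norm_num [mul_comm]

theorem integral_norm_sq_eq_toReal_lintegral {α F : Type*} [MeasurableSpace α] {ν : Measure α}
    [NormedAddCommGroup F] {g : α → F} (hg : AEStronglyMeasurable g ν) :
    ∫ x, ‖g x‖ ^ 2 ∂ν = (∫⁻ x, ‖g x‖ₑ ^ 2 ∂ν).toReal := by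
  rw [integral_eq_lintegral_of_nonneg_ae (ae_of_all _ fun x => sq_nonneg _) (hg.norm.pow 2)]
  simp_rw [ENNReal.ofReal_pow (norm_nonneg _), ofReal_norm]

section PointwiseBounds

variable {E F : Type*} [NormedAddCommGroup E] [NormedSpace ℝ E]
  [NormedAddCommGroup F] [NormedSpace ℝ F] [CompleteSpace F]

theorem enorm_sub_sq_le_lintegral_fderiv {f : E → F} (hf : ContDiff ℝ 1 f) (x y : E) :
    ‖f x - f y‖ₑ ^ 2 ≤
      ‖x - y‖ₑ ^ 2 * ∫⁻ t in Ioc (0 : ℝ) 1, ‖fderiv ℝ f (lineMap y x t)‖ₑ ^ 2 := by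
  have hDf : Continuous fun t : ℝ => fderiv ℝ f (lineMap y x t) :=
    (hf.continuous_fderiv one_ne_zero).comp (by fun_prop)
  have hFTC : f x - f y = ∫ t in (0 : ℝ)..1, fderiv ℝ f (lineMap y x t) (x - y) := by
    rw [intervalIntegral.integral_eq_sub_of_hasDerivAt (fun t _ =>
        (hf.differentiable one_ne_zero _).hasFDerivAt.comp_hasDerivAt t hasDerivAt_lineMap)
      ((hDf.clm_apply continuous_const).intervalIntegrable 0 1)]
    simp
  have hle : ‖f x - f y‖ₑ ≤ ‖x - y‖ₑ * ∫⁻ t in Ioc (0 : ℝ) 1, ‖fderiv ℝ f (lineMap y x t)‖ₑ := by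
    rw [hFTC, intervalIntegral.integral_of_le zero_le_one, mul_comm,
      ← lintegral_mul_const' _ _ enorm_ne_top]
    exact (enorm_integral_le_lintegral_enorm _).trans
      (lintegral_mono fun t => ContinuousLinearMap.le_opENorm _ _)
  calc ‖f x - f y‖ₑ ^ 2
      ≤ ‖x - y‖ₑ ^ 2 * (∫⁻ t in Ioc (0 : ℝ) 1, ‖fderiv ℝ f (lineMap y x t)‖ₑ) ^ 2 := by
        rw [← mul_pow]; gcongr
    _ ≤ ‖x - y‖ₑ ^ 2 * ∫⁻ t in Ioc (0 : ℝ) 1, ‖fderiv ℝ f (lineMap y x t)‖ₑ ^ 2 := by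
        grw [sq_lintegral_le_measure_univ_mul_lintegral_sq _ hDf.enorm.aemeasurable]
        simp

theorem Convex.enorm_sub_sq_le_lintegral_indicator {S : Set E} (hS : Convex ℝ S)
    {f : E → F} (hf : ContDiff ℝ 1 f) {x y : E} (hx : x ∈ S) (hy : y ∈ S) :
    ‖f x - f y‖ₑ ^ 2 ≤ ediam S ^ 2 * ∫⁻ t in Ioc (0 : ℝ) 1,
      (closure S).indicator (fun z => ‖fderiv ℝ f z‖ₑ ^ 2) (lineMap y x t) := by
  refine (enorm_sub_sq_le_lintegral_fderiv hf x y).trans (mul_le_mul' ?_ ?_)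
  · rw [← edist_eq_enorm_sub]
    exact pow_le_pow_left' (edist_le_ediam_of_mem hx hy) 2
  · refine setLIntegral_mono' measurableSet_Ioc fun t ht => ?_
    rw [indicator_of_mem (subset_closure (hS.lineMap_mem hy hx (Ioc_subset_Icc_self ht)))]

theorem enorm_sub_setAverage_sq_le {α : Type*} [MeasurableSpace α] {μ : Measure α} {K : Set α}
    (hK₀ : μ K ≠ 0) (hK : μ K ≠ ∞) {g : α → F} (hg : IntegrableOn g K μ) (x : F) :
    ‖x - ⨍ y in K, g y ∂μ‖ₑ ^ 2 ≤ (μ K)⁻¹ * ∫⁻ y in K, ‖x - g y‖ₑ ^ 2 ∂μ := by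
  set ν := (μ K)⁻¹ • μ.restrict K
  have hν : ν univ = 1 := by
    simp [ν, ENNReal.inv_mul_cancel hK₀ hK]
  have : IsProbabilityMeasure ν := ⟨hν⟩
  have hgν : Integrable g ν := hg.smul_measure (ENNReal.inv_ne_top.2 hK₀)
  have hav : x - ⨍ y in K, g y ∂μ = ∫ y, (x - g y) ∂ν := by
    rw [integral_sub (integrable_const x) hgν, integral_const, probReal_univ, one_smul]
    simp [average, ν]
  calc ‖x - ⨍ y in K, g y ∂μ‖ₑ ^ 2
      ≤ (∫⁻ y, ‖x - g y‖ₑ ∂ν) ^ 2 := by rw [hav]; gcongr; exact enorm_integral_le_lintegral_enorm _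
    _ ≤ ν univ * ∫⁻ y, ‖x - g y‖ₑ ^ 2 ∂ν :=
        sq_lintegral_le_measure_univ_mul_lintegral_sq ν (aestronglyMeasurable_const.sub hgν.1).enorm
    _ = (μ K)⁻¹ * ∫⁻ y in K, ‖x - g y‖ₑ ^ 2 ∂μ := by
        rw [hν, one_mul, lintegral_smul_measure, smul_eq_mul]

end PointwiseBounds

section HaarScaling

variable {E : Type*} [NormedAddCommGroup E] [NormedSpace ℝ E] [MeasurableSpace E] [BorelSpace E]
  [FiniteDimensional ℝ E] (μ : Measure E) [μ.IsAddHaarMeasure]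

theorem lintegral_comp_add_smul (G : E → ℝ≥0∞) (c : E) {a : ℝ} (ha : a ≠ 0) :
    ∫⁻ x, G (c + a • x) ∂μ = ENNReal.ofReal |(a ^ finrank ℝ E)⁻¹| * ∫⁻ x, G x ∂μ := by
  calc ∫⁻ x, G (c + a • x) ∂μ = ∫⁻ x, G (c + x) ∂(μ.map (a • ·)) :=
        (lintegral_map_equiv (fun x => G (c + x)) (MeasurableEquiv.smul₀ a ha)).symm
    _ = _ := by
      rw [Measure.map_addHaar_smul μ ha, lintegral_smul_measure,
        lintegral_add_left_eq_self (fun x => G x) c, smul_eq_mul]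

theorem lintegral_comp_add_smul_le (G : E → ℝ≥0∞) (c : E) {a : ℝ} (ha : 1 / 2 ≤ a) :
    ∫⁻ x, G (c + a • x) ∂μ ≤ 2 ^ finrank ℝ E * ∫⁻ x, G x ∂μ := by
  have ha₀ : 0 < a := by linarith
  rw [lintegral_comp_add_smul μ G c ha₀.ne', abs_of_pos (by positivity)]
  gcongr
  calc ENNReal.ofReal (a ^ finrank ℝ E)⁻¹ ≤ ENNReal.ofReal ((1 / 2) ^ finrank ℝ E)⁻¹ := by
        gcongr
    _ = 2 ^ finrank ℝ E := by simp

theorem lintegral_lintegral_comp_lineMap_le {G : E → ℝ≥0∞} (hG : Measurable G) {A B : Set E}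
    (hBA : μ B ≤ μ A) (t : ℝ) :
    ∫⁻ x in A, ∫⁻ y in B, G (lineMap y x t) ∂μ ∂μ ≤
      2 ^ finrank ℝ E * μ A * ∫⁻ x, G x ∂μ := by
  rcases le_or_gt t (1 / 2) with ht' | ht'
  · have hy : ∀ x, ∫⁻ y in B, G (lineMap y x t) ∂μ ≤ 2 ^ finrank ℝ E * ∫⁻ x, G x ∂μ := by
      intro x
      calc ∫⁻ y in B, G (lineMap y x t) ∂μ ≤ ∫⁻ y, G (t • x + (1 - t) • y) ∂μ := by
            simp only [lineMap_apply_module, add_comm]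
            exact setLIntegral_le_lintegral _ _
        _ ≤ _ := lintegral_comp_add_smul_le μ G _ (by linarith)
    calc ∫⁻ x in A, ∫⁻ y in B, G (lineMap y x t) ∂μ ∂μ
        ≤ ∫⁻ _ in A, 2 ^ finrank ℝ E * ∫⁻ x, G x ∂μ ∂μ := lintegral_mono hy
      _ = _ := by rw [setLIntegral_const]; ring
  · have hx : ∀ y, ∫⁻ x in A, G (lineMap y x t) ∂μ ≤ 2 ^ finrank ℝ E * ∫⁻ x, G x ∂μ := by
      intro y
      calc ∫⁻ x in A, G (lineMap y x t) ∂μ ≤ ∫⁻ x, G ((1 - t) • y + t • x) ∂μ := by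
            simp only [lineMap_apply_module]
            exact setLIntegral_le_lintegral _ _
        _ ≤ _ := lintegral_comp_add_smul_le μ G _ ht'.le
    have hmeas : Measurable (Function.uncurry fun x y => G (lineMap y x t)) :=
      hG.comp (by fun_prop)
    calc ∫⁻ x in A, ∫⁻ y in B, G (lineMap y x t) ∂μ ∂μ
        = ∫⁻ y in B, ∫⁻ x in A, G (lineMap y x t) ∂μ ∂μ :=
          lintegral_lintegral_swap hmeas.aemeasurable
      _ ≤ ∫⁻ _ in B, 2 ^ finrank ℝ E * ∫⁻ x, G x ∂μ ∂μ := lintegral_mono hx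
      _ ≤ _ := by rw [setLIntegral_const, mul_right_comm]; gcongr

theorem lintegral_lintegral_lintegral_comp_lineMap_le {G : E → ℝ≥0∞} (hG : Measurable G)
    {A B : Set E} (hBA : μ B ≤ μ A) :
    ∫⁻ x in A, ∫⁻ y in B, (∫⁻ t in Ioc (0 : ℝ) 1, G (lineMap y x t)) ∂μ ∂μ ≤
      2 ^ finrank ℝ E * μ A * ∫⁻ x, G x ∂μ := by
  have hmeas_yt : ∀ x, Measurable (Function.uncurry fun y (t : ℝ) => G (lineMap y x t)) :=
    fun x => hG.comp (by fun_prop)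
  have hmeas_xt : Measurable (Function.uncurry fun x (t : ℝ) =>
      ∫⁻ y in B, G (lineMap y x t) ∂μ) :=
    (hG.comp (by fun_prop) : Measurable fun p : (E × ℝ) × E => G (lineMap p.2 p.1.1 p.1.2)
      ).lintegral_prod_right'
  calc ∫⁻ x in A, ∫⁻ y in B, (∫⁻ t in Ioc (0 : ℝ) 1, G (lineMap y x t)) ∂μ ∂μ
      = ∫⁻ t in Ioc (0 : ℝ) 1, ∫⁻ x in A, ∫⁻ y in B, G (lineMap y x t) ∂μ ∂μ := by
        simp_rw [lintegral_lintegral_swap (hmeas_yt _).aemeasurable]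
        exact lintegral_lintegral_swap hmeas_xt.aemeasurable
    _ ≤ ∫⁻ _ in Ioc (0 : ℝ) 1, 2 ^ finrank ℝ E * μ A * ∫⁻ x, G x ∂μ :=
        lintegral_mono fun t => lintegral_lintegral_comp_lineMap_le μ hG hBA t
    _ = _ := by simp

end HaarScaling

section ConvexHull

variable {E F : Type*} [NormedAddCommGroup E] [NormedSpace ℝ E] [MeasurableSpace E] [BorelSpace E]
  [FiniteDimensional ℝ E] {μ : Measure E} [μ.IsAddHaarMeasure]
  [NormedAddCommGroup F] [NormedSpace ℝ F] [CompleteSpace F]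
  {K : Set E} {f : E → F}

theorem setLIntegral_convexHull_enorm_sub_setAverage_sq_le (hK : MeasurableSet K)
    (hKb : Bornology.IsBounded K) (hK₀ : μ K ≠ 0) (hf : ContDiff ℝ 1 f) :
    ∫⁻ x in convexHull ℝ K, ‖f x - ⨍ y in K, f y ∂μ‖ₑ ^ 2 ∂μ ≤
      2 ^ finrank ℝ E * (μ (convexHull ℝ K) / μ K) * ediam K ^ 2 *
        ∫⁻ x in convexHull ℝ K, ‖fderiv ℝ f x‖ₑ ^ 2 ∂μ := by
  set S := convexHull ℝ K
  have hS : Convex ℝ S := convex_convexHull ℝ K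
  -- `closure S` is measurable and differs from the convex set `S` by a null set.
  let G := (closure S).indicator fun z => ‖fderiv ℝ f z‖ₑ ^ 2
  have hG : Measurable G :=
    ((hf.continuous_fderiv one_ne_zero).measurable.enorm.pow_const 2).indicator
      isClosed_closure.measurableSet
  have hGS : ∫⁻ z, G z ∂μ = ∫⁻ x in S, ‖fderiv ℝ f x‖ₑ ^ 2 ∂μ := by
    rw [lintegral_indicator isClosed_closure.measurableSet,
      Measure.restrict_congr_set (closure_ae_eq_of_null_frontier (hS.addHaar_frontier μ))]
  have hKfin : μ K ≠ ∞ := hKb.measure_lt_top.ne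
  have hfK : IntegrableOn f K μ :=
    (hf.continuous.continuousOn.integrableOn_compact hKb.isCompact_closure).mono_set subset_closure
  have hKinv : (μ K)⁻¹ ≠ ∞ := ENNReal.inv_ne_top.2 hK₀
  have hdiam : ediam K ^ 2 ≠ ∞ := ENNReal.pow_ne_top hKb.ediam_ne_top
  calc ∫⁻ x in S, ‖f x - ⨍ y in K, f y ∂μ‖ₑ ^ 2 ∂μ
      ≤ ∫⁻ x in S, (μ K)⁻¹ * ∫⁻ y in K, ‖f x - f y‖ₑ ^ 2 ∂μ ∂μ :=
        lintegral_mono fun x => enorm_sub_setAverage_sq_le hK₀ hKfin hfK (f x)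
    _ ≤ ∫⁻ x in S, (μ K)⁻¹ *
          ∫⁻ y in K, ediam K ^ 2 * (∫⁻ t in Ioc (0 : ℝ) 1, G (lineMap y x t)) ∂μ ∂μ := by
        refine lintegral_mono_ae ((ae_restrict_mem₀ (hS.nullMeasurableSet μ)).mono fun x hx => ?_)
        gcongr 1
        refine setLIntegral_mono' hK fun y hy => ?_
        rw [← convexHull_ediam]
        exact hS.enorm_sub_sq_le_lintegral_indicator hf hx (subset_convexHull ℝ K hy)
    _ = (μ K)⁻¹ * ediam K ^ 2 *
          ∫⁻ x in S, ∫⁻ y in K, (∫⁻ t in Ioc (0 : ℝ) 1, G (lineMap y x t)) ∂μ ∂μ := by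
        simp_rw [lintegral_const_mul' _ _ hdiam, lintegral_const_mul' _ _ hKinv,
          lintegral_const_mul' _ _ hdiam, mul_assoc]
    _ ≤ (μ K)⁻¹ * ediam K ^ 2 * (2 ^ finrank ℝ E * μ S * ∫⁻ z, G z ∂μ) := by
        gcongr
        exact lintegral_lintegral_lintegral_comp_lineMap_le μ hG
          (measure_mono (subset_convexHull ℝ K))
    _ = _ := by rw [hGS, ENNReal.div_eq_inv_mul]; ring

theorem setIntegral_convexHull_norm_sub_setAverage_sq_le (hK : MeasurableSet K)
    (hKb : Bornology.IsBounded K) (hK₀ : μ K ≠ 0) (hf : ContDiff ℝ 1 f) :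
    ∫ x in convexHull ℝ K, ‖f x - ⨍ y in K, f y ∂μ‖ ^ 2 ∂μ ≤
      2 ^ finrank ℝ E * (μ.real (convexHull ℝ K) / μ.real K) * diam K ^ 2 *
        ∫ x in convexHull ℝ K, ‖fderiv ℝ f x‖ ^ 2 ∂μ := by
  have hSb : Bornology.IsBounded (convexHull ℝ K) := isBounded_convexHull.2 hKb
  have hDf : IntegrableOn (fun x => ‖fderiv ℝ f x‖ ^ 2) (convexHull ℝ K) μ :=
    (((hf.continuous_fderiv one_ne_zero).norm.pow 2).continuousOn.integrableOn_compact
      hSb.isCompact_closure).mono_set subset_closure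
  have hDf_fin : ∫⁻ x in convexHull ℝ K, ‖fderiv ℝ f x‖ₑ ^ 2 ∂μ ≠ ∞ := by
    simpa only [ENNReal.ofReal_pow (norm_nonneg _), ofReal_norm] using
      hDf.setLIntegral_lt_top.ne
  rw [integral_norm_sq_eq_toReal_lintegral (g := fun x => f x - ⨍ y in K, f y ∂μ)
      (hf.continuous.sub continuous_const).aestronglyMeasurable,
    integral_norm_sq_eq_toReal_lintegral (hf.continuous_fderiv one_ne_zero).aestronglyMeasurable]
  refine (ENNReal.toReal_mono ?_
    (setLIntegral_convexHull_enorm_sub_setAverage_sq_le hK hKb hK₀ hf)).trans_eq ?_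
  · have := hSb.measure_lt_top (μ := μ)
    have := hKb.ediam_ne_top
    finiteness
  · simp [ENNReal.toReal_div, measureReal_def, diam]

theorem measureReal_convexHull_le (hKb : Bornology.IsBounded K) {x₀ : E} (hx₀ : x₀ ∈ K) :
    μ.real (convexHull ℝ K) ≤ diam K ^ finrank ℝ E * μ.real (closedBall 0 1) := by
  rw [← Measure.addHaar_real_closedBall' μ x₀ diam_nonneg]
  refine measureReal_mono (convexHull_min (fun y hy => ?_) (convex_closedBall x₀ _))
    measure_closedBall_lt_top.ne
  exact mem_closedBall.2 (dist_le_diam_of_mem hKb hy hx₀)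

end ConvexHull

section Gradient

variable {E : Type*} [NormedAddCommGroup E] [InnerProductSpace ℝ E] [CompleteSpace E]
  {u : E → ℝ}

theorem ContDiff.gradient {n : WithTop ℕ∞} (hu : ContDiff ℝ (n + 1) u) :
    ContDiff ℝ n (gradient u) :=
  (InnerProductSpace.toDual ℝ E).symm.contDiff.comp (hu.fderiv_right le_rfl)

theorem gradient_sub_inner_add_const {x : E} (hu : DifferentiableAt ℝ u x) (g : E) (c : ℝ) :
    gradient (fun y => u y - (inner ℝ g y + c)) x = gradient u x - g := by
  have hlin : HasFDerivAt (fun y => inner ℝ g y + c) (InnerProductSpace.toDual ℝ E g) x := by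
    simpa only [InnerProductSpace.toDual_apply_apply] using
      (InnerProductSpace.toDual ℝ E g).hasFDerivAt.add_const c
  rw [gradient, (hu.hasFDerivAt.fun_sub hlin).fderiv, map_sub, LinearIsometryEquiv.symm_apply_apply,
    gradient]

end Gradient

theorem inv_mul_sqrt_add_sqrt_le {h A B B' J C₀ P : ℝ} (hh : 0 < h) (hC₀ : 0 ≤ C₀)
    (hA : A ≤ P ^ 2 * h ^ 2 * B') (hB : B ≤ B') (hB' : B' ≤ C₀ * h ^ 2 * J) :
    h⁻¹ * √A + √B ≤ (|P| + 1) * √C₀ * h * √J := by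
  have hsA : √A ≤ |P| * h * √B' := by
    calc √A ≤ √((P * h) ^ 2 * B') := Real.sqrt_le_sqrt (by linarith)
      _ = |P| * h * √B' := by
        rw [Real.sqrt_mul (sq_nonneg _), Real.sqrt_sq_eq_abs, abs_mul, abs_of_pos hh]
  have hsB' : √B' ≤ h * (√C₀ * √J) := by
    calc √B' ≤ √(h ^ 2 * (C₀ * J)) := Real.sqrt_le_sqrt (by linarith)
      _ = h * (√C₀ * √J) := by
        rw [Real.sqrt_mul (sq_nonneg _), Real.sqrt_sq hh.le, Real.sqrt_mul hC₀]
  calc h⁻¹ * √A + √B ≤ h⁻¹ * (|P| * h * √B') + √B' := by gcongr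
    _ = (|P| + 1) * √B' := by field_simp
    _ ≤ (|P| + 1) * (h * (√C₀ * √J)) := by gcongr
    _ = (|P| + 1) * √C₀ * h * √J := by ring

section BoundaryPoincare

variable {E : Type*} [NormedAddCommGroup E] [InnerProductSpace ℝ E] [FiniteDimensional ℝ E]
  [MeasureSpace E] [BorelSpace E] [IsFiniteMeasureOnCompacts (volume : Measure E)]

def HasBoundaryAveragePoincare (σ : Measure E) (K : Set E) (C : ℝ) : Prop :=
  ∀ w : E → ℝ, (∀ x ∈ convexHull ℝ K, DifferentiableAt ℝ w x) →
    IntegrableOn (fun x => w x ^ 2) (convexHull ℝ K) →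
    IntegrableOn (fun x => ‖gradient w x‖ ^ 2) (convexHull ℝ K) →
    IntegrableOn w (frontier K) σ →
    ∫ x in K, (w x - ⨍ y in frontier K, w y ∂σ) ^ 2 ≤
      C ^ 2 * diam K ^ 2 * ∫ x in convexHull ℝ K, ‖gradient w x‖ ^ 2

theorem HasBoundaryAveragePoincare.setIntegral_sq_sub_le {σ : Measure E} {K : Set E} {C : ℝ}
    (hP : HasBoundaryAveragePoincare σ K C) (hKb : Bornology.IsBounded K)
    (hσ : σ (frontier K) ≠ ∞) {u : E → ℝ} (hu : ContDiff ℝ 1 u) {g : E} {c : ℝ}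
    (hmean : ∫ x in frontier K, (inner ℝ g x + c) ∂σ = ∫ x in frontier K, u x ∂σ) :
    ∫ x in K, (u x - (inner ℝ g x + c)) ^ 2 ≤
      C ^ 2 * diam K ^ 2 * ∫ x in convexHull ℝ K, ‖gradient u x - g‖ ^ 2 := by
  set e := fun x => u x - (inner ℝ g x + c)
  have he : Continuous e := hu.continuous.sub (by fun_prop)
  have hge : ∀ x, gradient e x = gradient u x - g := fun x =>
    gradient_sub_inner_add_const (hu.differentiable one_ne_zero x) g c
  have hS : IsCompact (closure (convexHull ℝ K)) :=
    (isBounded_convexHull.2 hKb).isCompact_closure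
  have hintS : ∀ {φ : E → ℝ}, Continuous φ → IntegrableOn φ (convexHull ℝ K) := fun hφ =>
    (hφ.continuousOn.integrableOn_compact hS).mono_set subset_closure
  have hintσ : ∀ {φ : E → ℝ}, Continuous φ → IntegrableOn φ (frontier K) σ := fun hφ =>
    hφ.continuousOn.integrableOn_of_subset_isCompact
      (hKb.isCompact_closure.of_isClosed_subset isClosed_frontier frontier_subset_closure)
      isClosed_frontier.measurableSet subset_rfl hσ
  have havg : ⨍ y in frontier K, e y ∂σ = 0 := by
    rw [setAverage_eq, integral_sub (hintσ hu.continuous) (hintσ (by fun_prop)), hmean, sub_self,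
      smul_zero]
  have hgrad : Continuous fun x => ‖gradient e x‖ ^ 2 := by
    simp_rw [hge]
    exact ((hu.gradient (n := 0)).continuous.sub continuous_const).norm.pow 2
  simpa only [havg, sub_zero, hge] using
    hP e (fun x _ => (hu.differentiable one_ne_zero x).sub
      ((innerSL ℝ g).differentiableAt.add_const c)) (hintS (he.pow 2))
      (hintS hgrad) (hintσ he)

end BoundaryPoincare

theorem stmt_12_general (d : ℕ) (Cp c₁ : ℝ) (hc₁ : 0 < c₁) :
    ∃ C > (0 : ℝ),
      ∀ (K : Set (EuclideanSpace ℝ (Fin d)))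
        (u : EuclideanSpace ℝ (Fin d) → ℝ)
        (gp : EuclideanSpace ℝ (Fin d)) (cp : ℝ),
        MeasurableSet K → Bornology.IsBounded K → 0 < volume K →
        0 < Metric.diam K →
        0 < μH[(d : ℝ) - 1] (frontier K) → μH[(d : ℝ) - 1] (frontier K) < ⊤ →
        -- boundary-average Poincaré inequality (height and hourglass conditions)
        (∀ w : EuclideanSpace ℝ (Fin d) → ℝ,
          (∀ x ∈ convexHull ℝ K, DifferentiableAt ℝ w x) →
          IntegrableOn (fun x => (w x) ^ 2) (convexHull ℝ K) →
          IntegrableOn (fun x => ‖gradient w x‖ ^ 2) (convexHull ℝ K) →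
          IntegrableOn w (frontier K) μH[(d : ℝ) - 1] →
          ∫ x in K, (w x - ⨍ y in frontier K, w y ∂μH[(d : ℝ) - 1]) ^ 2 ≤
            Cp ^ 2 * (Metric.diam K) ^ 2 *
              ∫ x in convexHull ℝ K, ‖gradient w x‖ ^ 2) →
        -- volume scaling |K| ≳ h_K^d
        c₁ * (Metric.diam K) ^ d ≤ (volume K).toReal →
        -- u ∈ H²(conv K)
        ContDiff ℝ 2 u →
        IntegrableOn (fun x => ‖fderiv ℝ (fun y => gradient u y) x‖ ^ 2)
          (convexHull ℝ K) →
        -- the elliptic projection: gradient part and boundary normalization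
        gp = ⨍ x in K, gradient u x →
        (∫ x in frontier K, ((inner ℝ gp x : ℝ) + cp) ∂μH[(d : ℝ) - 1] =
          ∫ x in frontier K, u x ∂μH[(d : ℝ) - 1]) →
        (Metric.diam K)⁻¹ *
            Real.sqrt (∫ x in K, (u x - ((inner ℝ gp x : ℝ) + cp)) ^ 2)
          + Real.sqrt (∫ x in K, ‖gradient u x - gp‖ ^ 2) ≤
          C * Metric.diam K *
            Real.sqrt (∫ x in convexHull ℝ K,
              ‖fderiv ℝ (fun y => gradient u y) x‖ ^ 2) := by
  set ω := (volume : Measure (EuclideanSpace ℝ (Fin d))).real (closedBall 0 1)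
  have hω : 0 < ω :=
    ENNReal.toReal_pos (measure_closedBall_pos _ _ one_pos).ne' measure_closedBall_lt_top.ne
  refine ⟨(|Cp| + 1) * √(2 ^ d * (ω / c₁)), by positivity, ?_⟩
  intro K u gp cp hK hKb hK0 hd _ hfr hP hvol hu _ hgp hmean
  obtain ⟨x₀, hx₀⟩ := nonempty_of_measure_ne_zero hK0.ne'
  have hu₁ : ContDiff ℝ 1 (gradient u) := hu.gradient
  have hratio : volume.real (convexHull ℝ K) / volume.real K ≤ ω / c₁ := by
    have hhull := measureReal_convexHull_le (μ := volume) hKb hx₀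
    rw [finrank_euclideanSpace_fin] at hhull
    replace hvol : c₁ * diam K ^ d ≤ volume.real K := hvol
    rw [div_le_div_iff₀ ((by positivity : 0 < c₁ * diam K ^ d).trans_le hvol) hc₁]
    nlinarith
  have hS : ∫ x in convexHull ℝ K, ‖gradient u x - gp‖ ^ 2 ≤ 2 ^ d * (ω / c₁) * diam K ^ 2 *
      ∫ x in convexHull ℝ K, ‖fderiv ℝ (fun y => gradient u y) x‖ ^ 2 := by
    subst hgp
    refine (setIntegral_convexHull_norm_sub_setAverage_sq_le hK hKb hK0.ne' hu₁).trans ?_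
    rw [finrank_euclideanSpace_fin]
    gcongr
  have hKS : ∫ x in K, ‖gradient u x - gp‖ ^ 2 ≤
      ∫ x in convexHull ℝ K, ‖gradient u x - gp‖ ^ 2 :=
    setIntegral_mono_set (((hu₁.continuous.sub continuous_const).norm.pow 2).continuousOn
        |>.integrableOn_compact (isBounded_convexHull.2 hKb).isCompact_closure
        |>.mono_set subset_closure)
      (ae_of_all _ fun _ => by positivity) (subset_convexHull ℝ K).eventuallyLE
  exact inv_mul_sqrt_add_sqrt_le hd (by positivity)
    ((show HasBoundaryAveragePoincare _ K Cp from hP).setIntegral_sq_sub_le hKb hfr.ne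
      (hu.of_le one_le_two) hmean) hKS hS

/-- error estimate for the elliptic projection on an isotropic
element. Assume the boundary-average Poincaré inequality
`‖w - w̄_{∂K}‖_{L²(K)} ≤ Cp h_K ‖∇w‖_{L²(conv K)}` (height + hourglass conditions)
and the volume scaling `|K| ≥ c₁ h_K^d`. Let `Π_K u : x ↦ ⟪gp, x⟫ + cp` with
`gp = ⨍_K ∇u` and normalization `∫_{∂K} Π_K u = ∫_{∂K} u`. Then for
`u ∈ H²(conv K)`:
`h_K⁻¹ ‖u - Π_K u‖_{L²(K)} + ‖∇(u - Π_K u)‖_{L²(K)} ≤ C h_K |u|_{H²(conv K)}`. -/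
theorem stmt_12 (d : ℕ) (Cp c₁ : ℝ) (hCp : 0 < Cp) (hc₁ : 0 < c₁) :
    ∃ C > (0 : ℝ),
      ∀ (K : Set (EuclideanSpace ℝ (Fin d)))
        (u : EuclideanSpace ℝ (Fin d) → ℝ)
        (gp : EuclideanSpace ℝ (Fin d)) (cp : ℝ),
        MeasurableSet K → Bornology.IsBounded K → 0 < volume K →
        0 < Metric.diam K →
        0 < μH[(d : ℝ) - 1] (frontier K) → μH[(d : ℝ) - 1] (frontier K) < ⊤ →
        -- boundary-average Poincaré inequality (height and hourglass conditions)
        (∀ w : EuclideanSpace ℝ (Fin d) → ℝ,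
          (∀ x ∈ convexHull ℝ K, DifferentiableAt ℝ w x) →
          IntegrableOn (fun x => (w x) ^ 2) (convexHull ℝ K) →
          IntegrableOn (fun x => ‖gradient w x‖ ^ 2) (convexHull ℝ K) →
          IntegrableOn w (frontier K) μH[(d : ℝ) - 1] →
          ∫ x in K, (w x - ⨍ y in frontier K, w y ∂μH[(d : ℝ) - 1]) ^ 2 ≤
            Cp ^ 2 * (Metric.diam K) ^ 2 *
              ∫ x in convexHull ℝ K, ‖gradient w x‖ ^ 2) →
        -- volume scaling |K| ≳ h_K^d
        c₁ * (Metric.diam K) ^ d ≤ (volume K).toReal →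
        -- u ∈ H²(conv K)
        ContDiff ℝ 2 u →
        IntegrableOn (fun x => ‖fderiv ℝ (fun y => gradient u y) x‖ ^ 2)
          (convexHull ℝ K) →
        -- the elliptic projection: gradient part and boundary normalization
        gp = ⨍ x in K, gradient u x →
        (∫ x in frontier K, ((inner ℝ gp x : ℝ) + cp) ∂μH[(d : ℝ) - 1] =
          ∫ x in frontier K, u x ∂μH[(d : ℝ) - 1]) →
        (Metric.diam K)⁻¹ *
            Real.sqrt (∫ x in K, (u x - ((inner ℝ gp x : ℝ) + cp)) ^ 2)
          + Real.sqrt (∫ x in K, ‖gradient u x - gp‖ ^ 2) ≤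
          C * Metric.diam K *
            Real.sqrt (∫ x in convexHull ℝ K,
              ‖fderiv ℝ (fun y => gradient u y) x‖ ^ 2) :=
  stmt_12_general d Cp c₁ hc₁
end
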